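/- arXiv:1510.03943 — 2 statements merged into one kernel-verified Lean document; each statement's English description precedes it below -/
import Mathlib

section
/- Let ω ∈ Ω and let 𝒞 be a nonempty collection of contours of φ(ω), viewed as a closed subset of ℝ². Then any two vertices x, y ∈ ℤ² lying in the same connected component of ℝ² ∖ 𝒞 are joined by a path of edges of G that lies entirely in that same connected component of ℝ² ∖ 𝒞. -/
open scoped Classical ENNReal
open MeasureTheory

noncomputable section

namespace CP

/-! ### Site configurations and clusters on the square lattice `G = ℤ²`.
States `0` / `1` are encoded as `false` / `true`. -/

abbrev Config := ℤ × ℤ → Bool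

/-- Adjacency in the square lattice `G` on `ℤ²` (ℓ¹-distance one). -/
def ZAdj (u v : ℤ × ℤ) : Prop := |u.1 - v.1| + |u.2 - v.2| = 1

/-- The hard local constraint: around each black face (lower-left corner `(m,n)` with
`m + n` even), the corners read clockwise from the lower-left corner form one of the
words `0000, 1111, 0011, 1100, 0110, 1001`; equivalently, the two vertical sides are
each monochromatic, or the two horizontal sides are each monochromatic. -/
def Constrained (ω : Config) : Prop :=
  ∀ m n : ℤ, Even (m + n) →
    ((ω (m, n) = ω (m, n + 1) ∧ ω (m + 1, n) = ω (m + 1, n + 1)) ∨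
     (ω (m, n) = ω (m + 1, n) ∧ ω (m, n + 1) = ω (m + 1, n + 1)))

/-- `u` and `v` are joined by a path of vertices all having the same state. -/
def SameCluster (ω : Config) (u v : ℤ × ℤ) : Prop :=
  Relation.ReflTransGen (fun a b => ZAdj a b ∧ ω a = ω b) u v

/-- The cluster of the vertex `v`. -/
def cluster (ω : Config) (v : ℤ × ℤ) : Set (ℤ × ℤ) := {w | SameCluster ω v w}

def IsCluster (ω : Config) (D : Set (ℤ × ℤ)) : Prop := ∃ v, D = cluster ω v

def infiniteClusters (ω : Config) : Set (Set (ℤ × ℤ)) := {D | IsCluster ω D ∧ D.Infinite}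

/-! ### Contours.
An edge of `ℒ₁ ∪ ℒ₂` is encoded by the black face it crosses (its lower-left corner)
together with its direction (`true` = horizontal).  Endpoints are recorded in doubled
coordinates, so that the vertex `(x, y)` of the plane corresponds to `(2x, 2y)`. -/

abbrev BEdge := (ℤ × ℤ) × Bool

def IsBlackFace (f : ℤ × ℤ) : Prop := Even (f.1 + f.2)

/-- Edges of `ℒ₁` (whose vertices are the points `(m - 1/2, n + 1/2)`, `m, n` even). -/
def IsPrimalEdge (e : BEdge) : Prop :=
  (e.2 = true ∧ Even e.1.1 ∧ Even e.1.2) ∨ (e.2 = false ∧ Odd e.1.1 ∧ Odd e.1.2)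

/-- Edges of `ℒ₂` (whose vertices are the points `(m - 1/2, n + 1/2)`, `m, n` odd). -/
def IsDualEdge (e : BEdge) : Prop :=
  (e.2 = true ∧ Odd e.1.1 ∧ Odd e.1.2) ∨ (e.2 = false ∧ Even e.1.1 ∧ Even e.1.2)

/-- The two endpoints of a contour edge, in doubled coordinates. -/
def edgeEnds (e : BEdge) : (ℤ × ℤ) × (ℤ × ℤ) :=
  if e.2 then ((2 * e.1.1 - 1, 2 * e.1.2 + 1), (2 * e.1.1 + 3, 2 * e.1.2 + 1))
  else ((2 * e.1.1 + 1, 2 * e.1.2 - 1), (2 * e.1.1 + 1, 2 * e.1.2 + 3))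

def shareEnd (e₁ e₂ : BEdge) : Prop :=
  (edgeEnds e₁).1 = (edgeEnds e₂).1 ∨ (edgeEnds e₁).1 = (edgeEnds e₂).2 ∨
  (edgeEnds e₁).2 = (edgeEnds e₂).1 ∨ (edgeEnds e₁).2 = (edgeEnds e₂).2

/-- The contour configuration `φ(ω)`: a horizontal (resp. vertical) edge crossing the
black face with lower-left corner `(m, n)` is present iff the two lower corners differ
from the two upper ones (resp. the two left corners differ from the two right ones). -/
def contourCfg (ω : Config) (e : BEdge) : Bool :=
  if IsBlackFace e.1 then
    (if e.2 then ω (e.1.1, e.1.2) != ω (e.1.1, e.1.2 + 1)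
     else ω (e.1.1, e.1.2) != ω (e.1.1 + 1, e.1.2))
  else false

def SameContourB (φ : BEdge → Bool) (e e' : BEdge) : Prop :=
  Relation.ReflTransGen (fun a b => φ a = true ∧ φ b = true ∧ shareEnd a b) e e'

def contourB (φ : BEdge → Bool) (e : BEdge) : Set BEdge := {e' | SameContourB φ e e'}

/-- `C` is a contour (connected component of present edges) of the edge configuration `φ`. -/
def IsContourB (φ : BEdge → Bool) (C : Set BEdge) : Prop := ∃ e, φ e = true ∧ C = contourB φ e

def IsContour (ω : Config) (C : Set BEdge) : Prop := IsContourB (contourCfg ω) C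

def IsPrimalContour (ω : Config) (C : Set BEdge) : Prop := IsContour ω C ∧ ∀ e ∈ C, IsPrimalEdge e

def IsDualContour (ω : Config) (C : Set BEdge) : Prop := IsContour ω C ∧ ∀ e ∈ C, IsDualEdge e

/-- The vertex `v` of `G` is at Euclidean distance `1/2` from the contour edge `e`
(equivalently, `v` is a corner of the black face crossed by `e`). -/
def EdgeIncVtx (e : BEdge) (v : ℤ × ℤ) : Prop :=
  (v.1 = e.1.1 ∨ v.1 = e.1.1 + 1) ∧ (v.2 = e.1.2 ∨ v.2 = e.1.2 + 1)

/-- The contour `C` is incident to the cluster `D`. -/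
def ContourIncCluster (C : Set BEdge) (D : Set (ℤ × ℤ)) : Prop := ∃ e ∈ C, ∃ v ∈ D, EdgeIncVtx e v

/-- The edge of `G` joining `u` and `v` is crossed by the contour edge `e`
(doubled midpoints are compared). -/
def crossesG (e : BEdge) (u v : ℤ × ℤ) : Prop :=
  ZAdj u v ∧
    (if e.2 then
      (u.1 + v.1, u.2 + v.2) = (2 * e.1.1, 2 * e.1.2 + 1) ∨
      (u.1 + v.1, u.2 + v.2) = (2 * e.1.1 + 2, 2 * e.1.2 + 1)
     else
      (u.1 + v.1, u.2 + v.2) = (2 * e.1.1 + 1, 2 * e.1.2) ∨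
      (u.1 + v.1, u.2 + v.2) = (2 * e.1.1 + 1, 2 * e.1.2 + 2))

/-- The connected component of `v` in the graph obtained from `G` by deleting every
edge crossed by some contour edge belonging to `R`. -/
def GminusComp (R : Set BEdge) (v : ℤ × ℤ) : Set (ℤ × ℤ) :=
  {w | Relation.ReflTransGen (fun a b => ZAdj a b ∧ ¬∃ e ∈ R, crossesG e a b) v w}

/-! ### Ends of contours -/

/-- The connected component of the edge `e` within the edge set `S`. -/
def compIn (S : Set BEdge) (e : BEdge) : Set BEdge :=
  {e' | Relation.ReflTransGen (fun a b => a ∈ S ∧ b ∈ S ∧ shareEnd a b) e e'}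

/-- The contour `C` has at most two ends: removing any finite set of edges leaves at
most two infinite components. -/
def AtMostTwoEnds (C : Set BEdge) : Prop :=
  ∀ F : Set BEdge, F.Finite →
    ∀ e₁ e₂ e₃, e₁ ∈ C \ F → e₂ ∈ C \ F → e₃ ∈ C \ F →
      (compIn (C \ F) e₁).Infinite → (compIn (C \ F) e₂).Infinite →
      (compIn (C \ F) e₃).Infinite →
      compIn (C \ F) e₁ = compIn (C \ F) e₂ ∨ compIn (C \ F) e₁ = compIn (C \ F) e₃ ∨
        compIn (C \ F) e₂ = compIn (C \ F) e₃

/-! ### Planar embedding.  Note that `ℝ × ℝ` carries the ℓ∞ (sup) product metric. -/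

abbrev Plane := ℝ × ℝ

/-- The point of the plane with doubled coordinates `p`. -/
def ptOfDoubled (p : ℤ × ℤ) : Plane := ((p.1 : ℝ) / 2, (p.2 : ℝ) / 2)

/-- The planar position of a vertex of `G`. -/
def vtxPt (v : ℤ × ℤ) : Plane := ((v.1 : ℝ), (v.2 : ℝ))

/-- The closed planar segment realizing a contour edge. -/
def segOf (e : BEdge) : Set Plane :=
  segment ℝ (ptOfDoubled (edgeEnds e).1) (ptOfDoubled (edgeEnds e).2)

/-- The closed subset of `ℝ²` realizing a set of contour edges. -/
def contourSet (C : Set BEdge) : Set Plane := ⋃ e ∈ C, segOf e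

/-- The unbounded connected components of the complement of `S ⊆ ℝ²`. -/
def unbComps (S : Set Plane) : Set (Set Plane) :=
  {T | (∃ x ∈ Sᶜ, T = connectedComponentIn Sᶜ x) ∧ ¬Bornology.IsBounded T}

/-- The family `𝒞₂` of infinite contours whose planar complement has exactly two
unbounded components. -/
def C2set (ω : Config) : Set (Set BEdge) :=
  {C | IsContour ω C ∧ C.Infinite ∧ (unbComps (contourSet C)).ncard = 2}

/-! ### Interfaces, drawn on the dual `[Aℤ²]*` of the augmented square grid. -/

/-- `R(e)`: points at ℓ∞-distance at most `1/4` from the segment `e`. -/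
def Rnbhd (e : BEdge) : Set Plane := {x | Metric.infDist x (segOf e) ≤ 1 / 4}

/-- Edges of `[Aℤ²]*`, encoded by (index of) their lower-left endpoint and a direction
(`true` = horizontal); the vertex with index `(k, l)` is the point `(k/2 + 1/4, l/2 + 1/4)`. -/
abbrev QEdge := (ℤ × ℤ) × Bool

def qVtx (p : ℤ × ℤ) : Plane := ((p.1 : ℝ) / 2 + 1 / 4, (p.2 : ℝ) / 2 + 1 / 4)

def qEnds (q : QEdge) : (ℤ × ℤ) × (ℤ × ℤ) :=
  if q.2 then (q.1, (q.1.1 + 1, q.1.2)) else (q.1, (q.1.1, q.1.2 + 1))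

def qSeg (q : QEdge) : Set Plane := segment ℝ (qVtx (qEnds q).1) (qVtx (qEnds q).2)

/-- The interface of a contour `C`: the edges of `[Aℤ²]*` constituting the topological
boundary of `⋃ e ∈ C, R(e)`. -/
def ifaceEdges (C : Set BEdge) : Set QEdge := {q | qSeg q ⊆ frontier (⋃ e ∈ C, Rnbhd e)}

/-- The interface of the contour configuration `φ(ω)`: the union of the interfaces of
all contours. -/
def interfaceOf (ω : Config) : Set QEdge := ⋃ C ∈ {C | IsContour ω C}, ifaceEdges C

def qShare (q₁ q₂ : QEdge) : Prop :=
  (qEnds q₁).1 = (qEnds q₂).1 ∨ (qEnds q₁).1 = (qEnds q₂).2 ∨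
  (qEnds q₁).2 = (qEnds q₂).1 ∨ (qEnds q₁).2 = (qEnds q₂).2

def qCompIn (S : Set QEdge) (q : QEdge) : Set QEdge :=
  {q' | Relation.ReflTransGen (fun a b => a ∈ S ∧ b ∈ S ∧ qShare a b) q q'}

/-- `I` is a connected component of the interface of `φ(ω)`. -/
def IsInterfaceComp (ω : Config) (I : Set QEdge) : Prop :=
  ∃ q ∈ interfaceOf ω, I = qCompIn (interfaceOf ω) q

/-- The subset of `ℝ²` realizing a set of `[Aℤ²]*`-edges. -/
def qRealize (I : Set QEdge) : Set Plane := ⋃ q ∈ I, qSeg q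

/-- `F_I`: the vertices of `G` at ℓ∞-distance exactly `1/4` from `I`. -/
def interfaceNbrs (I : Set QEdge) : Set (ℤ × ℤ) :=
  {v | Metric.infDist (vtxPt v) (qRealize I) = 1 / 4}

/-- The edge set `I` is a doubly-infinite self-avoiding path in `[Aℤ²]*`. -/
def IsBiInfPathQ (I : Set QEdge) : Prop :=
  ∃ γ : ℤ → ℤ × ℤ, Function.Injective γ ∧
    (∀ i : ℤ, ∃ q ∈ I, qEnds q = (γ i, γ (i + 1)) ∨ qEnds q = (γ (i + 1), γ i)) ∧
    (∀ q ∈ I, ∃ i : ℤ, qEnds q = (γ i, γ (i + 1)) ∨ qEnds q = (γ (i + 1), γ i))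

/-- The edge set `I` is a (finite) self-avoiding cycle in `[Aℤ²]*`. -/
def IsCycleQ (I : Set QEdge) : Prop :=
  ∃ n : ℕ, 0 < n ∧ ∃ γ : ℤ → ℤ × ℤ,
    (∀ i : ℤ, γ (i + n) = γ i) ∧
    (∀ i j : ℤ, 0 ≤ i → i < j → j < n → γ i ≠ γ j) ∧
    (∀ i : ℤ, ∃ q ∈ I, qEnds q = (γ i, γ (i + 1)) ∨ qEnds q = (γ (i + 1), γ i)) ∧
    (∀ q ∈ I, ∃ i : ℤ, qEnds q = (γ i, γ (i + 1)) ∨ qEnds q = (γ (i + 1), γ i))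

/-- `F` is the vertex set of a doubly-infinite self-avoiding path in `G`. -/
def IsBiInfPathVtxSet (F : Set (ℤ × ℤ)) : Prop :=
  ∃ p : ℤ → ℤ × ℤ, Function.Injective p ∧ (∀ i : ℤ, ZAdj (p i) (p (i + 1))) ∧ Set.range p = F

/-- `F` is the vertex set of a self-avoiding cycle in `G`. -/
def IsCycleVtxSet (F : Set (ℤ × ℤ)) : Prop :=
  ∃ n : ℕ, 0 < n ∧ ∃ p : ℤ → ℤ × ℤ,
    (∀ i : ℤ, p (i + n) = p i) ∧
    (∀ i j : ℤ, 0 ≤ i → i < j → j < n → p i ≠ p j) ∧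
    (∀ i : ℤ, ZAdj (p i) (p (i + 1))) ∧ Set.range p = F

/-! ### Measures, translations and symmetries -/

/-- Translation of configurations by `t ∈ ℤ²`. -/
def shift (t : ℤ × ℤ) (ω : Config) : Config := fun v => ω (v.1 - t.1, v.2 - t.2)

/-- The involution `θ` exchanging the states `0` and `1`. -/
def flipConf (ω : Config) : Config := fun v => !(ω v)

/-- The primal contour configuration (the marginal on `E(ℒ₁)`). -/
def primalOf (ω : Config) : BEdge → Bool := fun e => if IsPrimalEdge e then contourCfg ω e else false

/-- The dual contour configuration (the marginal on `E(ℒ₂)`). -/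
def dualOf (ω : Config) : BEdge → Bool := fun e => if IsDualEdge e then contourCfg ω e else false

/-- The four boundary edges of the face `S` of `ℒ₁` indexed by the parameters
`(p, q)` (`p`, `q` odd) of the `ℒ₂`-vertex at its centre. -/
def faceEdgesL1 (p q : ℤ) : Set BEdge :=
  {((p - 1, q + 1), true), ((p - 1, q - 1), true), ((p - 2, q), false), ((p, q), false)}

/-- Switch the states of the four boundary edges of a face of `ℒ₁`. -/
def switchFace (p q : ℤ) (φ : BEdge → Bool) : BEdge → Bool :=
  fun e => if e ∈ faceEdgesL1 p q then !(φ e) else φ e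

/-- (A1): invariance under the subgroup of `ℤ²` generated by `(1,1)` and `(1,-1)`,
i.e. under every translation `t` with `t.1 + t.2` even. -/
def SatisfiesA1 (μ : Measure Config) : Prop :=
  ∀ t : ℤ × ℤ, Even (t.1 + t.2) → Measure.map (shift t) μ = μ

/-- (A2): `2ℤ × 2ℤ`-ergodicity. -/
def SatisfiesA2 (μ : Measure Config) : Prop :=
  ∀ A : Set Config, MeasurableSet A →
    (∀ t : ℤ × ℤ, shift (2 * t.1, 2 * t.2) ⁻¹' A = A) → μ A = 0 ∨ μ A = 1

/-- (A3): symmetry under exchanging `0` and `1`. -/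
def SatisfiesA3 (μ : Measure Config) : Prop := Measure.map flipConf μ = μ

/-- (Ak1): invariance under `2kℤ × 2kℤ`-translations. -/
def SatisfiesAk1 (k : ℕ) (μ : Measure Config) : Prop :=
  ∀ t : ℤ × ℤ, Measure.map (shift (2 * (k : ℤ) * t.1, 2 * (k : ℤ) * t.2)) μ = μ

/-- (Ak2): `2kℤ × 2kℤ`-ergodicity. -/
def SatisfiesAk2 (k : ℕ) (μ : Measure Config) : Prop :=
  ∀ A : Set Config, MeasurableSet A →
    (∀ t : ℤ × ℤ, shift (2 * (k : ℤ) * t.1, 2 * (k : ℤ) * t.2) ⁻¹' A = A) →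
      μ A = 0 ∨ μ A = 1

/-- (A4): finite energy of the primal contour marginal `ν₁ = primalOf_* μ`:
switching the four sides of a face of `ℒ₁` preserves positivity of probabilities. -/
def SatisfiesA4 (μ : Measure Config) : Prop :=
  ∀ p q : ℤ, Odd p → Odd q → ∀ E : Set (BEdge → Bool), MeasurableSet E →
    0 < Measure.map primalOf μ E → 0 < Measure.map primalOf μ (switchFace p q '' E)

/-! ### The induced site configuration on `V(ℒ₁)` (for assumption (A5)).
Vertices of `ℒ₁` are indexed by `(a, b) ∈ ℤ²` (the vertex `(2a - 1/2, 2b + 1/2)`);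
the base vertex `v₀` has index `(0, 0)`. -/

/-- Parity (as a `Bool`) of the number of `i` between `0` and `j` with `f i = true`. -/
def rangeParity (f : ℤ → Bool) (j : ℤ) : Bool :=
  if 0 ≤ j then decide (Odd (((Finset.Ico (0 : ℤ) j).filter fun i => f i = true).card))
  else decide (Odd (((Finset.Ico j (0 : ℤ)).filter fun i => f i = true).card))

/-- The site configuration on `V(ℒ₁)` induced by a dual contour configuration `ψ`
and the state `b₀` at the base vertex: states flip exactly across present dual edges. -/
def inducedSite (b₀ : Bool) (ψ : BEdge → Bool) : Config :=
  fun v => Bool.xor b₀ (Bool.xor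
    (rangeParity (fun i => ψ ((2 * i, 0), false)) v.1)
    (rangeParity (fun l => ψ ((2 * v.1 - 1, 2 * l + 1), true)) v.2))

/-- The law `λ₁` on `{0,1}^{V(ℒ₁)}` induced by the dual contour marginal of `μ`
together with a fair coin for the state of the base vertex. -/
def lam1 (μ : Measure Config) : Measure Config :=
  (1 / 2 : ℝ≥0∞) • Measure.map (fun ω => inducedSite true (dualOf ω)) μ +
    (1 / 2 : ℝ≥0∞) • Measure.map (fun ω => inducedSite false (dualOf ω)) μ

/-- (A5): `λ₁` is `2ℤ × 2ℤ`-ergodic (translations of the plane by `2ℤ × 2ℤ` act on the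
index set of `V(ℒ₁)` as all of `ℤ × ℤ`). -/
def SatisfiesA5 (μ : Measure Config) : Prop :=
  ∀ A : Set Config, MeasurableSet A → (∀ t : ℤ × ℤ, shift t ⁻¹' A = A) →
    lam1 μ A = 0 ∨ lam1 μ A = 1

/-! ### `ℒ₁`-edges indexed by `ℒ₁`-vertex coordinates; boxes of `ℒ₂`-faces. -/

/-- The horizontal edge of `ℒ₁` joining the `ℒ₁`-vertices indexed `(a, b)` and `(a+1, b)`. -/
def hEdge (a b : ℤ) : BEdge := ((2 * a, 2 * b), true)

/-- The vertical edge of `ℒ₁` joining the `ℒ₁`-vertices indexed `(a, b)` and `(a, b+1)`. -/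
def vEdge (a b : ℤ) : BEdge := ((2 * a - 1, 2 * b + 1), false)

/-- Membership in `Φ₁`: a bond configuration of `ℒ₁` in which every vertex of `ℒ₁`
has an even number of incident present edges. -/
def MemPhi1 (φ : BEdge → Bool) : Prop :=
  (∀ e, φ e = true → IsPrimalEdge e) ∧
    ∀ a b : ℤ,
      Even ((if φ (hEdge (a - 1) b) then 1 else 0) + (if φ (hEdge a b) then 1 else 0) +
        (if φ (vEdge a (b - 1)) then 1 else 0) + (if φ (vEdge a b) then 1 else 0) : ℕ)

/-- The edges of `ℒ₁` crossing the boundary of the `M × N` box of faces of `ℒ₂`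
whose lower-left face contains the `ℒ₁`-vertex indexed `(a₀, b₀)`. -/
def crossEdges (a₀ b₀ : ℤ) (M N : ℕ) : Finset BEdge :=
  ((Finset.Ico b₀ (b₀ + (N : ℤ))).image fun b => hEdge (a₀ - 1) b) ∪
  ((Finset.Ico b₀ (b₀ + (N : ℤ))).image fun b => hEdge (a₀ + (M : ℤ) - 1) b) ∪
  ((Finset.Ico a₀ (a₀ + (M : ℤ))).image fun a => vEdge a (b₀ - 1)) ∪
  ((Finset.Ico a₀ (a₀ + (M : ℤ))).image fun a => vEdge a (b₀ + (N : ℤ) - 1))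

/-- The `ℒ₁`-vertex indexed `(a, b)` lies strictly inside the box. -/
def insideBox (a₀ b₀ : ℤ) (M N : ℕ) (a b : ℤ) : Prop :=
  a₀ ≤ a ∧ a < a₀ + (M : ℤ) ∧ b₀ ≤ b ∧ b < b₀ + (N : ℤ)

/-- The edges of `ℒ₁` strictly enclosed by the boundary of the box (both endpoints
strictly inside): the subgraph `B_{M-1,N-1}`. -/
def interiorEdges (a₀ b₀ : ℤ) (M N : ℕ) : Set BEdge :=
  {e | (∃ a b : ℤ, e = hEdge a b ∧ insideBox a₀ b₀ M N a b ∧ insideBox a₀ b₀ M N (a + 1) b) ∨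
       (∃ a b : ℤ, e = vEdge a b ∧ insideBox a₀ b₀ M N a b ∧ insideBox a₀ b₀ M N a (b + 1))}

/-! ### Contours of an unconstrained site configuration on `V(ℒ₂)`.
Vertices of `ℒ₂` are indexed by `(c, d) ∈ ℤ²` (the vertex `(2c + 1/2, 2d + 3/2)`);
adjacency of `ℒ₂`-vertices is `ZAdj` on indices. -/

/-- The contour configuration `ψ₁(ρ)` on `ℒ₁` of a site configuration `ρ` on `V(ℒ₂)`:
an edge of `ℒ₁` is present iff the two `ℒ₂`-vertices at distance `1` from it have
different states. -/
def psi1 (ρ : Config) (e : BEdge) : Bool :=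
  if e.2 then
    if Even e.1.1 ∧ Even e.1.2 then
      ρ (e.1.1 / 2, e.1.2 / 2) != ρ (e.1.1 / 2, e.1.2 / 2 - 1)
    else false
  else
    if Odd e.1.1 ∧ Odd e.1.2 then
      ρ ((e.1.1 + 1) / 2 - 1, (e.1.2 - 1) / 2) != ρ ((e.1.1 + 1) / 2, (e.1.2 - 1) / 2)
    else false

/-- The (indices of the) two `ℒ₂`-vertices at Euclidean distance `1` from an `ℒ₁`-edge. -/
def sepVerts (e : BEdge) : Set (ℤ × ℤ) :=
  if e.2 then {(e.1.1 / 2, e.1.2 / 2), (e.1.1 / 2, e.1.2 / 2 - 1)}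
  else {((e.1.1 + 1) / 2 - 1, (e.1.2 - 1) / 2), ((e.1.1 + 1) / 2, (e.1.2 - 1) / 2)}

/-- A contour `C ⊆ E(ℒ₁)` is incident to a set `D` of `ℒ₂`-vertices (Euclidean
distance `1`). -/
def ContourIncL2Cluster (C : Set BEdge) (D : Set (ℤ × ℤ)) : Prop :=
  ∃ e ∈ C, ∃ v ∈ sepVerts e, v ∈ D

/-! Contour segments run along the lines `x ∈ ℤ + 1/2` and `y ∈ ℤ + 1/2` between points of
`(ℤ + 1/2)²`. Hence a contour segment meeting an edge of `G` covers the whole common side of the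
two closed unit squares centred at its endpoints. So if `p` avoids the contours, the (up to four)
lattice points whose unit squares contain `p` are joined by edges of `G` avoiding the contours.
Thus "the lattice point nearest to `p` is reachable from `x` by such edges" is a locally
constant property of `p` off the contours, hence constant on the component of `x`; and the edges
of such a path, being segments avoiding the contours, stay in that component. -/

open Set Filter Topology Metric Relation

section

variable {E : Type*} [AddCommGroup E] [Module ℝ E] [TopologicalSpace E] [ContinuousAdd E]
  [ContinuousSMul ℝ E]

lemma segment_subset_connectedComponentIn {U : Set E} {z a b : E}
    (ha : a ∈ connectedComponentIn U z) (hab : segment ℝ a b ⊆ U) :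
    segment ℝ a b ⊆ connectedComponentIn U z := by
  rw [connectedComponentIn_eq ha]
  exact (convex_segment a b).isPreconnected.subset_connectedComponentIn
    (left_mem_segment ℝ a b) hab

lemma reflTransGen_segment_subset_connectedComponentIn {α : Type*} {f : α → E} {U : Set E}
    {r : α → α → Prop} (hr : ∀ a b, r a b → segment ℝ (f a) (f b) ⊆ U) {x y : α}
    (hx : f x ∈ U) (h : ReflTransGen r x y) :
    ReflTransGen (fun a b => r a b ∧ segment ℝ (f a) (f b) ⊆ connectedComponentIn U (f x))
      x y := by
  suffices f y ∈ connectedComponentIn U (f x) ∧ ReflTransGen _ x y from this.2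
  induction h with
  | refl => exact ⟨mem_connectedComponentIn hx, .refl⟩
  | tail _ hbc ih =>
    have hseg := segment_subset_connectedComponentIn ih.1 (hr _ _ hbc)
    exact ⟨hseg (right_mem_segment ℝ _ _), ih.2.tail ⟨hbc, hseg⟩⟩

end

lemma exists_fin_path_of_reflTransGen {α : Type*} {r : α → α → Prop} {x y : α}
    (h : ReflTransGen r x y) :
    ∃ n : ℕ, ∃ p : Fin (n + 1) → α, p 0 = x ∧ p (Fin.last n) = y ∧
      ∀ i : Fin n, r (p i.castSucc) (p i.succ) := by
  obtain ⟨s, hx, hy⟩ :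
      ∃ s : RelSeries {q : α × α | r q.1 q.2}, s.head = x ∧ s.last = y := by
    induction h with
    | refl => exact ⟨RelSeries.singleton _ x, rfl, rfl⟩
    | tail _ hbc ih =>
      obtain ⟨s, hx, hb⟩ := ih
      exact ⟨s.snoc _ (hb ▸ hbc), by simp [hx], by simp⟩
  exact ⟨s.length, s, hx, hy, s.step⟩

lemma segment_eq_Icc_prod_singleton {x₁ x₂ : ℝ} (y : ℝ) (h : x₁ ≤ x₂) :
    segment ℝ ((x₁, y) : ℝ × ℝ) (x₂, y) = Icc x₁ x₂ ×ˢ {y} := by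
  rw [← Prod.image_mk_segment_left, segment_eq_Icc h, prod_singleton]

lemma segment_eq_singleton_prod_Icc (x : ℝ) {y₁ y₂ : ℝ} (h : y₁ ≤ y₂) :
    segment ℝ ((x, y₁) : ℝ × ℝ) (x, y₂) = {x} ×ˢ Icc y₁ y₂ := by
  rw [← Prod.image_mk_segment_right, segment_eq_Icc h, singleton_prod]


lemma segOf_horizontal (a b : ℤ) :
    segOf ((a, b), true) = Icc ((a : ℝ) - 1 / 2) (a + 3 / 2) ×ˢ {(b : ℝ) + 1 / 2} := by
  rw [← segment_eq_Icc_prod_singleton _ (by linarith)]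
  simp only [segOf, edgeEnds, ptOfDoubled, if_true]
  congr 1 <;> ext <;> push_cast <;> ring

lemma segOf_vertical (a b : ℤ) :
    segOf ((a, b), false) = {(a : ℝ) + 1 / 2} ×ˢ Icc ((b : ℝ) - 1 / 2) (b + 3 / 2) := by
  rw [← segment_eq_singleton_prod_Icc _ (by linarith)]
  simp only [segOf, edgeEnds, ptOfDoubled, Bool.false_eq_true, if_false]
  congr 1 <;> ext <;> push_cast <;> ring

lemma mem_closedBall_vtxPt {p : Plane} {w : ℤ × ℤ} {r : ℝ} :
    p ∈ closedBall (vtxPt w) r ↔ |p.1 - w.1| ≤ r ∧ |p.2 - w.2| ≤ r := by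
  simp [Prod.dist_eq, Real.dist_eq, vtxPt]

lemma isometry_vtxPt : Isometry vtxPt :=
  Isometry.of_dist_eq fun a b => by simp [vtxPt, Prod.dist_eq, Int.dist_cast_real]

lemma finite_vtxPt_preimage_closedBall (p : Plane) (r : ℝ) :
    (vtxPt ⁻¹' closedBall p r).Finite :=
  (isometry_vtxPt.isClosedEmbedding.isProperMap.isCompact_preimage
    (isCompact_closedBall p r)).finite_of_discrete

lemma locallyFinite_closedBall_vtxPt (r : ℝ) : LocallyFinite fun w => closedBall (vtxPt w) r :=
  fun p => ⟨ball p 1, ball_mem_nhds p one_pos,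
    (finite_vtxPt_preimage_closedBall p (r + 1)).subset fun w ⟨q, hqw, hqp⟩ => by
      rw [mem_closedBall'] at hqw
      rw [mem_ball] at hqp
      rw [mem_preimage, mem_closedBall]
      linarith [dist_triangle (vtxPt w) q p]⟩

lemma eventually_forall_mem_closedBall_vtxPt (p : Plane) (r : ℝ) :
    ∀ᶠ q in 𝓝 p, ∀ w, q ∈ closedBall (vtxPt w) r → p ∈ closedBall (vtxPt w) r := by
  filter_upwards [(locallyFinite_closedBall_vtxPt r).iInter_compl_mem_nhds
    (fun _ => isClosed_closedBall) p] with q hq w hqw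
  by_contra hpw
  exact mem_iInter₂.1 hq w hpw hqw

lemma segment_vtxPt_right (m n : ℤ) :
    segment ℝ (vtxPt (m, n)) (vtxPt (m + 1, n)) = Icc (m : ℝ) (m + 1) ×ˢ {(n : ℝ)} := by
  rw [← segment_eq_Icc_prod_singleton _ (by linarith)]
  simp [vtxPt]

lemma segment_vtxPt_up (m n : ℤ) :
    segment ℝ (vtxPt (m, n)) (vtxPt (m, n + 1)) = {(m : ℝ)} ×ˢ Icc (n : ℝ) (n + 1) := by
  rw [← segment_eq_singleton_prod_Icc _ (by linarith)]
  simp [vtxPt]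

lemma singleton_prod_Icc_subset_segOf {m n : ℤ} {e : BEdge}
    (he : (segment ℝ (vtxPt (m, n)) (vtxPt (m + 1, n)) ∩ segOf e).Nonempty) :
    {(m : ℝ) + 1 / 2} ×ˢ Icc ((n : ℝ) - 1 / 2) (n + 1 / 2) ⊆ segOf e := by
  obtain ⟨⟨x, y⟩, hq, hqe⟩ := he
  rw [segment_vtxPt_right] at hq
  obtain ⟨⟨hx₁, hx₂⟩, rfl : y = n⟩ := hq
  obtain ⟨⟨a, b⟩, _ | _⟩ := e
  · rw [segOf_vertical] at hqe ⊢
    obtain ⟨rfl : x = _, hb₁, hb₂⟩ := hqe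
    have ha₁ : m < a + 1 := by exact_mod_cast (by linarith : (m : ℝ) < a + 1)
    have ha₂ : a < m + 1 := by exact_mod_cast (by linarith : (a : ℝ) < m + 1)
    have hb₁ : b < n + 1 := by exact_mod_cast (by linarith : (b : ℝ) < n + 1)
    have hb₂ : n < b + 2 := by exact_mod_cast (by linarith : (n : ℝ) < b + 2)
    obtain rfl : a = m := by omega
    have hbn : (b : ℝ) ≤ n := by exact_mod_cast (by omega : b ≤ n)
    have hnb : (n : ℝ) ≤ b + 1 := by exact_mod_cast (by omega : n ≤ b + 1)
    exact prod_mono subset_rfl (Icc_subset_Icc (by linarith) (by linarith))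
  · rw [segOf_horizontal] at hqe
    obtain ⟨-, hnb : (n : ℝ) = b + 1 / 2⟩ := hqe
    have : 2 * n = 2 * b + 1 := by exact_mod_cast (by linarith : (2 * n : ℝ) = 2 * b + 1)
    omega

lemma Icc_prod_singleton_subset_segOf {m n : ℤ} {e : BEdge}
    (he : (segment ℝ (vtxPt (m, n)) (vtxPt (m, n + 1)) ∩ segOf e).Nonempty) :
    Icc ((m : ℝ) - 1 / 2) (m + 1 / 2) ×ˢ {(n : ℝ) + 1 / 2} ⊆ segOf e := by
  obtain ⟨⟨x, y⟩, hq, hqe⟩ := he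
  rw [segment_vtxPt_up] at hq
  obtain ⟨rfl : x = m, hy₁, hy₂⟩ := hq
  obtain ⟨⟨a, b⟩, _ | _⟩ := e
  · rw [segOf_vertical] at hqe
    obtain ⟨hma : (m : ℝ) = a + 1 / 2, -⟩ := hqe
    have : 2 * m = 2 * a + 1 := by exact_mod_cast (by linarith : (2 * m : ℝ) = 2 * a + 1)
    omega
  · rw [segOf_horizontal] at hqe ⊢
    obtain ⟨⟨ha₁, ha₂⟩, rfl : y = _⟩ := hqe
    have hb₁ : n < b + 1 := by exact_mod_cast (by linarith : (n : ℝ) < b + 1)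
    have hb₂ : b < n + 1 := by exact_mod_cast (by linarith : (b : ℝ) < n + 1)
    have ha₁ : a < m + 1 := by exact_mod_cast (by linarith : (a : ℝ) < m + 1)
    have ha₂ : m < a + 2 := by exact_mod_cast (by linarith : (m : ℝ) < a + 2)
    obtain rfl : b = n := by omega
    have ham : (a : ℝ) ≤ m := by exact_mod_cast (by omega : a ≤ m)
    have hma : (m : ℝ) ≤ a + 1 := by exact_mod_cast (by omega : m ≤ a + 1)
    exact prod_mono (Icc_subset_Icc (by linarith) (by linarith)) subset_rfl

def AdjAvoiding (S : Set Plane) (a b : ℤ × ℤ) : Prop :=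
  ZAdj a b ∧ segment ℝ (vtxPt a) (vtxPt b) ⊆ Sᶜ

instance (S : Set Plane) : Std.Symm (AdjAvoiding S) where
  symm a b := fun ⟨hab, h⟩ =>
    ⟨by rwa [ZAdj, abs_sub_comm b.1, abs_sub_comm b.2],
      segment_symm ℝ (vtxPt a) (vtxPt b) ▸ h⟩

section Cells

variable {R : Set BEdge} {p : Plane}

lemma adjAvoiding_right (hp : p ∉ contourSet R) {m n : ℤ}
    (h₁ : p ∈ closedBall (vtxPt (m, n)) (1 / 2))
    (h₂ : p ∈ closedBall (vtxPt (m + 1, n)) (1 / 2)) :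
    AdjAvoiding (contourSet R) (m, n) (m + 1, n) := by
  refine ⟨by simp [ZAdj], fun q hq hqR => hp ?_⟩
  obtain ⟨e, he, hqe⟩ := mem_iUnion₂.1 hqR
  rw [mem_closedBall_vtxPt, abs_le, abs_le] at h₁ h₂
  push_cast at h₂
  exact mem_iUnion₂.2 ⟨e, he, singleton_prod_Icc_subset_segOf ⟨q, hq, hqe⟩
    ⟨mem_singleton_iff.2 (by linarith), by linarith, by linarith⟩⟩

lemma adjAvoiding_up (hp : p ∉ contourSet R) {m n : ℤ}
    (h₁ : p ∈ closedBall (vtxPt (m, n)) (1 / 2))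
    (h₂ : p ∈ closedBall (vtxPt (m, n + 1)) (1 / 2)) :
    AdjAvoiding (contourSet R) (m, n) (m, n + 1) := by
  refine ⟨by simp [ZAdj], fun q hq hqR => hp ?_⟩
  obtain ⟨e, he, hqe⟩ := mem_iUnion₂.1 hqR
  rw [mem_closedBall_vtxPt, abs_le, abs_le] at h₁ h₂
  push_cast at h₂
  exact mem_iUnion₂.2 ⟨e, he, Icc_prod_singleton_subset_segOf ⟨q, hq, hqe⟩
    ⟨⟨by linarith, by linarith⟩, mem_singleton_iff.2 (by linarith)⟩⟩

lemma reflTransGen_adjAvoiding_horizontal (hp : p ∉ contourSet R) {m k n : ℤ}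
    (hm : p ∈ closedBall (vtxPt (m, n)) (1 / 2)) (hk : p ∈ closedBall (vtxPt (k, n)) (1 / 2)) :
    ReflTransGen (AdjAvoiding (contourSet R)) (m, n) (k, n) := by
  wlog hmk : m ≤ k generalizing m k
  · exact Std.Symm.symm _ _ (this hk hm (by omega))
  have hkm : k ≤ m + 1 := by
    have := abs_le.1 (mem_closedBall_vtxPt.1 hm).1
    have := abs_le.1 (mem_closedBall_vtxPt.1 hk).1
    exact_mod_cast (by linarith : (k : ℝ) ≤ m + 1)
  obtain rfl | rfl : k = m ∨ k = m + 1 := by omega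
  · rfl
  · exact .single (adjAvoiding_right hp hm hk)

lemma reflTransGen_adjAvoiding_vertical (hp : p ∉ contourSet R) {m n k : ℤ}
    (hn : p ∈ closedBall (vtxPt (m, n)) (1 / 2)) (hk : p ∈ closedBall (vtxPt (m, k)) (1 / 2)) :
    ReflTransGen (AdjAvoiding (contourSet R)) (m, n) (m, k) := by
  wlog hnk : n ≤ k generalizing n k
  · exact Std.Symm.symm _ _ (this hk hn (by omega))
  have hkn : k ≤ n + 1 := by
    have := abs_le.1 (mem_closedBall_vtxPt.1 hn).2
    have := abs_le.1 (mem_closedBall_vtxPt.1 hk).2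
    exact_mod_cast (by linarith : (k : ℝ) ≤ n + 1)
  obtain rfl | rfl : k = n ∨ k = n + 1 := by omega
  · rfl
  · exact .single (adjAvoiding_up hp hn hk)

lemma reflTransGen_adjAvoiding_of_mem_closedBall (hp : p ∉ contourSet R) {w w' : ℤ × ℤ}
    (hw : p ∈ closedBall (vtxPt w) (1 / 2)) (hw' : p ∈ closedBall (vtxPt w') (1 / 2)) :
    ReflTransGen (AdjAvoiding (contourSet R)) w w' := by
  have hcorner : p ∈ closedBall (vtxPt (w'.1, w.2)) (1 / 2) :=
    mem_closedBall_vtxPt.2 ⟨(mem_closedBall_vtxPt.1 hw').1, (mem_closedBall_vtxPt.1 hw).2⟩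
  exact (reflTransGen_adjAvoiding_horizontal hp hw hcorner).trans
    (reflTransGen_adjAvoiding_vertical hp hcorner hw')

end Cells

lemma reflTransGen_adjAvoiding_of_mem_connectedComponentIn {R : Set BEdge} {x y : ℤ × ℤ}
    (hy : vtxPt y ∈ connectedComponentIn (contourSet R)ᶜ (vtxPt x)) :
    ReflTransGen (AdjAvoiding (contourSet R)) x y := by
  let nearest (p : Plane) : ℤ × ℤ := (round p.1, round p.2)
  have mem_nearest (p : Plane) : p ∈ closedBall (vtxPt (nearest p)) (1 / 2) :=
    mem_closedBall_vtxPt.2 ⟨abs_sub_round p.1, abs_sub_round p.2⟩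
  let reached (p : Plane) : Bool :=
    decide (ReflTransGen (AdjAvoiding (contourSet R)) x (nearest p))
  have hcont : ContinuousOn reached (contourSet R)ᶜ := fun p hp => by
    refine ContinuousAt.continuousWithinAt (tendsto_nhds_of_eventually_eq ?_)
    filter_upwards [eventually_forall_mem_closedBall_vtxPt p (1 / 2)] with q hq
    have hpq :=
      reflTransGen_adjAvoiding_of_mem_closedBall hp (mem_nearest p) (hq _ (mem_nearest q))
    simp only [reached, decide_eq_decide]
    exact ⟨fun h => h.trans (Std.Symm.symm _ _ hpq), fun h => h.trans hpq⟩
  have hx : vtxPt x ∈ (contourSet R)ᶜ := connectedComponentIn_nonempty_iff.1 ⟨_, hy⟩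
  have hreach : reached (vtxPt y) = reached (vtxPt x) :=
    isPreconnected_connectedComponentIn.constant
      (hcont.mono (connectedComponentIn_subset _ _)) hy (mem_connectedComponentIn hx)
  simp only [reached, nearest, vtxPt, round_intCast, Prod.mk.eta, decide_eq_decide] at hreach
  exact hreach.2 .refl

theorem lattice_path_in_component_general
    (𝒞 : Set (Set BEdge))
    (x y : ℤ × ℤ)
    (hy : vtxPt y ∈ connectedComponentIn (⋃ C ∈ 𝒞, contourSet C)ᶜ (vtxPt x)) :
    ∃ n : ℕ, ∃ p : Fin (n + 1) → ℤ × ℤ, p 0 = x ∧ p (Fin.last n) = y ∧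
      ∀ i : Fin n, ZAdj (p i.castSucc) (p i.succ) ∧
        segment ℝ (vtxPt (p i.castSucc)) (vtxPt (p i.succ)) ⊆
          connectedComponentIn (⋃ C ∈ 𝒞, contourSet C)ᶜ (vtxPt x) := by
  have hS : ⋃ C ∈ 𝒞, contourSet C = contourSet (⋃₀ 𝒞) := by
    ext q
    simp [contourSet]
  rw [hS] at hy ⊢
  have hx := connectedComponentIn_nonempty_iff.1 ⟨_, hy⟩
  obtain ⟨n, p, hp₀, hpₙ, hstep⟩ := exists_fin_path_of_reflTransGen <|
    reflTransGen_segment_subset_connectedComponentIn (fun _ _ h => h.2) hx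
      (reflTransGen_adjAvoiding_of_mem_connectedComponentIn hy)
  exact ⟨n, p, hp₀, hpₙ, fun i => ⟨(hstep i).1.1, (hstep i).2⟩⟩

/-- Lemma 2.4 of the paper: two vertices of `ℤ²` lying in the same
connected component of the complement of a nonempty collection of contours are joined
by a lattice path staying in that component. -/
theorem lattice_path_in_component
    (ω : Config) (hω : Constrained ω) (𝒞 : Set (Set BEdge))
    (h𝒞 : ∀ C ∈ 𝒞, IsContour ω C) (hne : 𝒞.Nonempty)
    (x y : ℤ × ℤ)
    (hx : vtxPt x ∈ (⋃ C ∈ 𝒞, contourSet C)ᶜ)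
    (hy : vtxPt y ∈ connectedComponentIn (⋃ C ∈ 𝒞, contourSet C)ᶜ (vtxPt x)) :
    ∃ n : ℕ, ∃ p : Fin (n + 1) → ℤ × ℤ, p 0 = x ∧ p (Fin.last n) = y ∧
      ∀ i : Fin n, ZAdj (p i.castSucc) (p i.succ) ∧
        segment ℝ (vtxPt (p i.castSucc)) (vtxPt (p i.succ)) ⊆
          connectedComponentIn (⋃ C ∈ 𝒞, contourSet C)ᶜ (vtxPt x) :=
  lattice_path_in_component_general 𝒞 x y hy

end CP

end
end

section
/- Let ω ∈ Ω. If C₁ and C₂ are two distinct infinite contours of φ(ω), then there exists an infinite cluster of ω that is incident to C₁. In particular, if φ(ω) has at least two infinite contours, then ω has an infinite 0-cluster or an infinite 1-cluster. -/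
open scoped Classical ENNReal
open MeasureTheory

noncomputable section

namespace CP

/-!
Suppose every cluster incident to `C₁` is finite. The component, in `G` minus the edges crossed
by `C₁`, of a corner of `C₂` contains a vertex `u` on `C₁`, and the cluster `A` of `u` is finite.
Above a highest vertex of `A` the contour configuration has an edge, lying on a contour `C₀`;
the edges of `C₀` incident to `A` form a finite subgraph `F` with even degrees, since at the
centre of a white face they cross exactly the sides separating `A` from its complement.
Counting the edges of `F` met by the upward ray from a vertex gives a parity which is constant
along edges of `G` not crossed by `F`, even far away, and odd on `A` (a discrete Jordan curve
theorem). If `C₀ = C₁`, then `u` is joined to far corners of `C₂` without crossing `F`; otherwise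
`u` is joined along `C₁` to far corners of `C₁` without crossing `F`. Either way the parity at `u`
is even, a contradiction.
-/

open Relation

/-! ### The square lattice and the contour configuration -/

lemma zadj_iff {u v : ℤ × ℤ} : ZAdj u v ↔
    (v.1 = u.1 + 1 ∧ v.2 = u.2) ∨ (v.1 = u.1 - 1 ∧ v.2 = u.2) ∨
    (v.1 = u.1 ∧ v.2 = u.2 + 1) ∨ (v.1 = u.1 ∧ v.2 = u.2 - 1) := by
  unfold ZAdj
  rcases abs_cases (u.1 - v.1) with ⟨h1, _⟩ | ⟨h1, _⟩ <;>
    rcases abs_cases (u.2 - v.2) with ⟨h2, _⟩ | ⟨h2, _⟩ <;> rw [h1, h2] <;> omega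

lemma ZAdj.symm {u v : ℤ × ℤ} (h : ZAdj u v) : ZAdj v u := by
  rw [zadj_iff] at h ⊢; omega

lemma reflTransGen_of_int_chain {α : Type*} {r : α → α → Prop} (f : ℤ → α)
    (hup : ∀ k, r (f k) (f (k + 1))) (hdown : ∀ k, r (f (k + 1)) (f k)) (k : ℤ) :
    ReflTransGen r (f 0) (f k) := by
  induction k using Int.induction_on with
  | zero => exact .refl
  | succ k ih => exact ih.tail (hup k)
  | pred k ih => exact ih.tail (by simpa using hdown (-k - 1))

lemma reflTransGen_zadj (a b : ℤ × ℤ) : ReflTransGen ZAdj a b := by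
  have row := reflTransGen_of_int_chain (r := ZAdj) (fun k => (a.1 + k, a.2))
    (fun k => zadj_iff.2 (by simp; omega)) (fun k => zadj_iff.2 (by simp; omega)) (b.1 - a.1)
  have col := reflTransGen_of_int_chain (r := ZAdj) (fun k => (b.1, a.2 + k))
    (fun k => zadj_iff.2 (by simp; omega)) (fun k => zadj_iff.2 (by simp; omega)) (b.2 - a.2)
  simp only [add_zero, add_sub_cancel] at row col
  exact row.trans col

lemma present_horiz_iff {ω : Config} {m n : ℤ} :
    contourCfg ω ((m, n), true) = true ↔ Even (m + n) ∧ ω (m, n) ≠ ω (m, n + 1) := by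
  unfold contourCfg IsBlackFace
  by_cases h : Even (m + n) <;> simp [h]

lemma present_vert_iff {ω : Config} {m n : ℤ} :
    contourCfg ω ((m, n), false) = true ↔ Even (m + n) ∧ ω (m, n) ≠ ω (m + 1, n) := by
  unfold contourCfg IsBlackFace
  by_cases h : Even (m + n) <;> simp [h]

lemma isBlackFace_of_present {ω : Config} {e : BEdge} (h : contourCfg ω e = true) :
    IsBlackFace e.1 := by
  by_contra hb
  simp [contourCfg, hb] at h

lemma not_present_horiz_and_vert {ω : Config} (hω : Constrained ω) (f : ℤ × ℤ) :
    ¬(contourCfg ω (f, true) = true ∧ contourCfg ω (f, false) = true) := by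
  rintro ⟨hh, hv⟩
  rw [present_horiz_iff] at hh
  rw [present_vert_iff] at hv
  rcases hω f.1 f.2 hh.1 with hc | hc
  exacts [hh.2 hc.1, hv.2 hc.1]

lemma rows_eq_of_present_horiz {ω : Config} (hω : Constrained ω) {m n : ℤ}
    (h : contourCfg ω ((m, n), true) = true) :
    ω (m, n) = ω (m + 1, n) ∧ ω (m, n + 1) = ω (m + 1, n + 1) := by
  rw [present_horiz_iff] at h
  exact (hω m n h.1).resolve_left fun hc => h.2 hc.1

lemma cols_eq_of_present_vert {ω : Config} (hω : Constrained ω) {m n : ℤ}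
    (h : contourCfg ω ((m, n), false) = true) :
    ω (m, n) = ω (m, n + 1) ∧ ω (m + 1, n) = ω (m + 1, n + 1) := by
  rw [present_vert_iff] at h
  exact (hω m n h.1).resolve_right fun hc => h.2 hc.1

lemma crossesG_horiz_iff {m n : ℤ} {u v : ℤ × ℤ} :
    crossesG ((m, n), true) u v ↔
      (u = (m, n) ∧ v = (m, n + 1)) ∨ (u = (m, n + 1) ∧ v = (m, n)) ∨
      (u = (m + 1, n) ∧ v = (m + 1, n + 1)) ∨ (u = (m + 1, n + 1) ∧ v = (m + 1, n)) := by
  unfold crossesG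
  rw [if_pos rfl, zadj_iff]
  obtain ⟨u1, u2⟩ := u
  obtain ⟨v1, v2⟩ := v
  simp only [Prod.mk.injEq]
  omega

lemma crossesG_vert_iff {m n : ℤ} {u v : ℤ × ℤ} :
    crossesG ((m, n), false) u v ↔
      (u = (m, n) ∧ v = (m + 1, n)) ∨ (u = (m + 1, n) ∧ v = (m, n)) ∨
      (u = (m, n + 1) ∧ v = (m + 1, n + 1)) ∨ (u = (m + 1, n + 1) ∧ v = (m, n + 1)) := by
  unfold crossesG
  rw [if_neg (by simp), zadj_iff]
  obtain ⟨u1, u2⟩ := u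
  obtain ⟨v1, v2⟩ := v
  simp only [Prod.mk.injEq]
  omega

lemma crossesG_up_iff {e : BEdge} {k l : ℤ} :
    crossesG e (k, l) (k, l + 1) ↔ e.2 = true ∧ (k = e.1.1 ∨ k = e.1.1 + 1) ∧ e.1.2 = l := by
  obtain ⟨⟨m, n⟩, _ | _⟩ := e
  · simp only [crossesG_vert_iff, Prod.ext_iff]; simp; omega
  · simp only [crossesG_horiz_iff, Prod.ext_iff]; simp; omega

lemma crossesG_right_iff {e : BEdge} {k l : ℤ} :
    crossesG e (k, l) (k + 1, l) ↔ e.2 = false ∧ e.1.1 = k ∧ (l = e.1.2 ∨ l = e.1.2 + 1) := by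
  obtain ⟨⟨m, n⟩, _ | _⟩ := e
  · simp only [crossesG_vert_iff, Prod.ext_iff]; simp; omega
  · simp only [crossesG_horiz_iff, Prod.ext_iff]; simp; omega

lemma crossesG.symm {e : BEdge} {u v : ℤ × ℤ} (h : crossesG e u v) : crossesG e v u := by
  obtain ⟨f, _ | _⟩ := e
  · rw [crossesG_vert_iff] at h ⊢; tauto
  · rw [crossesG_horiz_iff] at h ⊢; tauto

lemma crossesG.edgeIncVtx {e : BEdge} {u v : ℤ × ℤ} (h : crossesG e u v) :
    EdgeIncVtx e u := by
  obtain ⟨f, _ | _⟩ := e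
  · rw [crossesG_vert_iff] at h
    rcases h with ⟨rfl, -⟩ | ⟨rfl, -⟩ | ⟨rfl, -⟩ | ⟨rfl, -⟩ <;> simp [EdgeIncVtx]
  · rw [crossesG_horiz_iff] at h
    rcases h with ⟨rfl, -⟩ | ⟨rfl, -⟩ | ⟨rfl, -⟩ | ⟨rfl, -⟩ <;> simp [EdgeIncVtx]

/-- An edge of `G` is a side of exactly one black face. -/
lemma crossesG_unique {e e' : BEdge} {u v : ℤ × ℤ} (hb : IsBlackFace e.1)
    (hb' : IsBlackFace e'.1) (hc : crossesG e u v) (hc' : crossesG e' u v) : e = e' := by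
  obtain ⟨⟨m, n⟩, _ | _⟩ := e <;> obtain ⟨⟨m', n'⟩, _ | _⟩ := e' <;>
    simp only [IsBlackFace, Int.even_iff, crossesG_vert_iff, crossesG_horiz_iff,
      Prod.ext_iff] at hb hb' hc hc' <;> simp only [Prod.mk.injEq, and_true] <;> omega

lemma exists_black_crossesG {u v : ℤ × ℤ} (h : ZAdj u v) :
    ∃ e : BEdge, IsBlackFace e.1 ∧ crossesG e u v := by
  have right_up : ∀ x y : ℤ, (∃ e : BEdge, IsBlackFace e.1 ∧ crossesG e (x, y) (x + 1, y)) ∧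
      ∃ e : BEdge, IsBlackFace e.1 ∧ crossesG e (x, y) (x, y + 1) := by
    intro x y
    have hp : Even (x + y) ∨ Even (x + (y - 1)) ∧ Even (x - 1 + y) := by
      simp only [Int.even_iff]; omega
    rcases hp with hb | ⟨hb, hb'⟩
    · exact ⟨⟨((x, y), false), hb, crossesG_vert_iff.2 (.inl ⟨rfl, rfl⟩)⟩,
        ⟨((x, y), true), hb, crossesG_horiz_iff.2 (.inl ⟨rfl, rfl⟩)⟩⟩
    · refine ⟨⟨((x, y - 1), false), hb, crossesG_vert_iff.2 ?_⟩,
        ⟨((x - 1, y), true), hb', crossesG_horiz_iff.2 ?_⟩⟩ <;> simp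
  obtain ⟨x, y⟩ := u
  obtain ⟨x', y'⟩ := v
  rcases zadj_iff.1 h with ⟨h1, h2⟩ | ⟨h1, h2⟩ | ⟨h1, h2⟩ | ⟨h1, h2⟩ <;>
    simp only at h1 h2 <;> subst x' y'
  · exact (right_up x y).1
  · obtain ⟨e, hb, hc⟩ := (right_up (x - 1) y).1
    exact ⟨e, hb, by simpa using hc.symm⟩
  · exact (right_up x y).2
  · obtain ⟨e, hb, hc⟩ := (right_up x (y - 1)).2
    exact ⟨e, hb, by simpa using hc.symm⟩

lemma present_iff_of_crossesG {ω : Config} (hω : Constrained ω) {e : BEdge} {u v : ℤ × ℤ}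
    (hb : IsBlackFace e.1) (hc : crossesG e u v) : contourCfg ω e = true ↔ ω u ≠ ω v := by
  obtain ⟨⟨m, n⟩, _ | _⟩ := e
  · replace hb : Even (m + n) := hb
    rw [crossesG_vert_iff] at hc
    rw [present_vert_iff, and_iff_right hb]
    rcases hc with ⟨rfl, rfl⟩ | ⟨rfl, rfl⟩ | ⟨rfl, rfl⟩ | ⟨rfl, rfl⟩ <;>
      rcases hω m n hb with ⟨h1, h2⟩ | ⟨h1, h2⟩ <;> simp_all [eq_comm]
  · replace hb : Even (m + n) := hb
    rw [crossesG_horiz_iff] at hc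
    rw [present_horiz_iff, and_iff_right hb]
    rcases hc with ⟨rfl, rfl⟩ | ⟨rfl, rfl⟩ | ⟨rfl, rfl⟩ | ⟨rfl, rfl⟩ <;>
      rcases hω m n hb with ⟨h1, h2⟩ | ⟨h1, h2⟩ <;> simp_all [eq_comm]

/-! ### Clusters, contours and their ends -/

lemma SameCluster.state_eq {ω : Config} {u v : ℤ × ℤ} (h : SameCluster ω u v) :
    ω u = ω v := by
  induction h with
  | refl => rfl
  | tail _ h ih => exact ih.trans h.2

lemma state_eq_of_mem_cluster {ω : Config} {z u v : ℤ × ℤ} (hu : u ∈ cluster ω z)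
    (hv : v ∈ cluster ω z) : ω u = ω v :=
  (SameCluster.state_eq hu).symm.trans (SameCluster.state_eq hv)

lemma mem_cluster_iff_of_agree {ω : Config} {z u v : ℤ × ℤ} (ha : ZAdj u v)
    (he : ω u = ω v) : u ∈ cluster ω z ↔ v ∈ cluster ω z :=
  ⟨fun hu => hu.tail ⟨ha, he⟩, fun hv => hv.tail ⟨ha.symm, he.symm⟩⟩

lemma shareEnd.symm {e f : BEdge} (h : shareEnd e f) : shareEnd f e := by
  unfold shareEnd at *; tauto

lemma SameContourB.symm {φ : BEdge → Bool} {e f : BEdge} (h : SameContourB φ e f) :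
    SameContourB φ f e := by
  induction h with
  | refl => exact .refl
  | tail _ h ih => exact ih.head ⟨h.2.1, h.1, h.2.2.symm⟩

lemma contourB_eq_of_mem {φ : BEdge → Bool} {e f : BEdge} (h : f ∈ contourB φ e) :
    contourB φ f = contourB φ e :=
  Set.ext fun _ => ⟨fun hg => ReflTransGen.trans h hg, fun hg => ReflTransGen.trans h.symm hg⟩

section Contour

variable {ω : Config} {C : Set BEdge}

lemma isContour_contourB {e : BEdge} (he : contourCfg ω e = true) :
    IsContour ω (contourB (contourCfg ω) e) :=
  ⟨e, he, rfl⟩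

lemma IsContour.present (hC : IsContour ω C) {e : BEdge} (he : e ∈ C) :
    contourCfg ω e = true := by
  obtain ⟨b, hb, rfl⟩ := hC
  induction he with
  | refl => exact hb
  | tail _ h _ => exact h.2.1

lemma IsContour.mem_of_shareEnd (hC : IsContour ω C) {e f : BEdge} (he : e ∈ C)
    (hf : contourCfg ω f = true) (hs : shareEnd e f) : f ∈ C := by
  have hpe := hC.present he
  obtain ⟨b, -, rfl⟩ := hC
  exact he.tail ⟨hpe, hf, hs⟩

lemma IsContour.eq_contourB (hC : IsContour ω C) {e : BEdge} (he : e ∈ C) :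
    C = contourB (contourCfg ω) e := by
  obtain ⟨b, -, rfl⟩ := hC
  exact (contourB_eq_of_mem he).symm

lemma IsContour.eq_of_mem {C' : Set BEdge} (hC : IsContour ω C) (hC' : IsContour ω C')
    {e : BEdge} (he : e ∈ C) (he' : e ∈ C') : C = C' :=
  (hC.eq_contourB he).trans (hC'.eq_contourB he').symm

end Contour

lemma edgeEnds_horiz (m n : ℤ) :
    edgeEnds ((m, n), true) = ((2 * m - 1, 2 * n + 1), (2 * m + 3, 2 * n + 1)) := rfl

lemma edgeEnds_vert (m n : ℤ) :
    edgeEnds ((m, n), false) = ((2 * m + 1, 2 * n - 1), (2 * m + 1, 2 * n + 3)) := rfl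

lemma edgeEnds_fst_ne_snd (e : BEdge) : (edgeEnds e).1 ≠ (edgeEnds e).2 := by
  obtain ⟨⟨m, n⟩, _ | _⟩ := e <;> simp [edgeEnds] <;> omega

def HasEnd (e : BEdge) (Q : ℤ × ℤ) : Prop := (edgeEnds e).1 = Q ∨ (edgeEnds e).2 = Q

lemma shareEnd_iff {e f : BEdge} : shareEnd e f ↔ ∃ Q, HasEnd e Q ∧ HasEnd f Q := by
  unfold shareEnd HasEnd
  constructor
  · rintro (h | h | h | h)
    exacts [⟨_, .inl rfl, .inl h.symm⟩, ⟨_, .inl rfl, .inr h.symm⟩,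
      ⟨_, .inr rfl, .inl h.symm⟩, ⟨_, .inr rfl, .inr h.symm⟩]
  · rintro ⟨Q, he | he, hf | hf⟩ <;> subst he <;> simp [hf]

/-- The east, west, north and south edges ending at the centre `(x + 1/2, y + 1/2)` of the
face with lower-left corner `(x, y)`. -/
def slots (x y : ℤ) : Finset BEdge :=
  {((x + 1, y), true), ((x - 1, y), true), ((x, y + 1), false), ((x, y - 1), false)}

lemma hasEnd_iff_mem_slots {e : BEdge} {x y : ℤ} :
    HasEnd e (2 * x + 1, 2 * y + 1) ↔ e ∈ slots x y := by
  obtain ⟨⟨m, n⟩, _ | _⟩ := e <;>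
    simp only [HasEnd, edgeEnds, slots, Finset.mem_insert, Finset.mem_singleton,
      Prod.mk.injEq] <;> simp <;> omega

lemma HasEnd.exists_mem_slots {e : BEdge} {Q : ℤ × ℤ} (h : HasEnd e Q) :
    ∃ x y, Q = (2 * x + 1, 2 * y + 1) ∧ e ∈ slots x y := by
  obtain ⟨⟨m, n⟩, _ | _⟩ := e <;> simp only [HasEnd, edgeEnds] at h <;>
    rcases h with rfl | rfl
  exacts [⟨m, n - 1, by simp; ring, by simp [slots]⟩, ⟨m, n + 1, by simp; ring, by simp [slots]⟩,
    ⟨m - 1, n, by simp; ring, by simp [slots]⟩, ⟨m + 1, n, by simp; ring, by simp [slots]⟩]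

lemma odd_of_mem_slots {e : BEdge} {x y : ℤ} (hb : IsBlackFace e.1) (he : e ∈ slots x y) :
    Odd (x + y) := by
  simp only [slots, Finset.mem_insert, Finset.mem_singleton] at he
  unfold IsBlackFace at hb
  rcases he with rfl | rfl | rfl | rfl <;> simp only [Int.even_iff, Int.odd_iff] at hb ⊢ <;>
    omega

/-! ### Components of `G` minus the edges crossed by a set of contour edges -/

lemma _root_.Relation.ReflTransGen.and_or_exists_exit {α : Type*} {r p : α → α → Prop}
    {a b : α} (h : ReflTransGen r a b) :
    ReflTransGen (fun x y => r x y ∧ p x y) a b ∨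
      ∃ u v, ReflTransGen (fun x y => r x y ∧ p x y) a u ∧ r u v ∧ ¬p u v := by
  induction h with
  | refl => exact .inl .refl
  | @tail b c _ hbc ih =>
    rcases ih with ih | ih
    · by_cases hp : p b c
      · exact .inl (ih.tail ⟨hbc, hp⟩)
      · exact .inr ⟨_, _, ih, hbc, hp⟩
    · exact .inr ih

def IsCorner (f w : ℤ × ℤ) : Prop := (w.1 = f.1 ∨ w.1 = f.1 + 1) ∧ (w.2 = f.2 ∨ w.2 = f.2 + 1)

def OpenStep (R : Set BEdge) (a b : ℤ × ℤ) : Prop := ZAdj a b ∧ ¬∃ e ∈ R, crossesG e a b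

def presentOutside (ω : Config) (C : Set BEdge) : Set BEdge :=
  {f | contourCfg ω f = true ∧ f ∉ C}

section GminusComp

variable {R : Set BEdge} {u v w : ℤ × ℤ}

lemma OpenStep.symm (h : OpenStep R u v) : OpenStep R v u :=
  ⟨h.1.symm, fun ⟨e, he, hc⟩ => h.2 ⟨e, he, hc.symm⟩⟩

lemma mem_GminusComp_symm (h : w ∈ GminusComp R v) : v ∈ GminusComp R w := by
  change ReflTransGen (OpenStep R) v w at h
  induction h with
  | refl => exact .refl
  | tail _ hs ih => exact ReflTransGen.head hs.symm ih

lemma mem_GminusComp_trans (h : u ∈ GminusComp R v) (h' : w ∈ GminusComp R u) :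
    w ∈ GminusComp R v :=
  ReflTransGen.trans h h'

lemma mem_GminusComp_of_isCorner {f w' : ℤ × ℤ} (hbot : OpenStep R f (f.1 + 1, f.2))
    (hleft : OpenStep R f (f.1, f.2 + 1))
    (hright : OpenStep R (f.1 + 1, f.2) (f.1 + 1, f.2 + 1))
    (hw : IsCorner f w) (hw' : IsCorner f w') : w' ∈ GminusComp R w := by
  have from_base : ∀ w, IsCorner f w → w ∈ GminusComp R f := by
    rintro ⟨x, y⟩ ⟨hx | hx, hy | hy⟩ <;> simp only at hx hy <;> subst x y
    · exact .refl
    · exact .single hleft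
    · exact .single hbot
    · exact (ReflTransGen.single hbot).tail hright
  exact mem_GminusComp_trans (mem_GminusComp_symm (from_base w hw)) (from_base w' hw')

lemma exists_edgeIncVtx_mem_GminusComp (hR : R.Nonempty) (v : ℤ × ℤ) :
    ∃ e ∈ R, ∃ u, EdgeIncVtx e u ∧ u ∈ GminusComp R v := by
  obtain ⟨e₁, he₁⟩ := hR
  rcases (reflTransGen_zadj v (e₁.1.1, e₁.1.2)).and_or_exists_exit
    (p := fun a b => ¬∃ e ∈ R, crossesG e a b) with h | ⟨u, y, hu, -, hcross⟩
  · exact ⟨e₁, he₁, _, ⟨.inl rfl, .inl rfl⟩, h⟩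
  · obtain ⟨e, he, hc⟩ := not_not.1 hcross
    exact ⟨e, he, u, hc.edgeIncVtx, hu⟩

end GminusComp

section Reach

variable {ω : Config} {C : Set BEdge}

lemma cluster_subset_GminusComp (hω : Constrained ω) (v : ℤ × ℤ) :
    cluster ω v ⊆ GminusComp {f | contourCfg ω f = true} v := by
  intro w hw
  induction hw with
  | refl => exact .refl
  | tail _ hs ih =>
    exact ReflTransGen.tail ih ⟨hs.1, fun ⟨f, hf, hc⟩ =>
      (present_iff_of_crossesG hω (isBlackFace_of_present hf) hc).1 hf hs.2⟩

lemma openStep_of_crossesG {g : BEdge} {a b : ℤ × ℤ} (hb : IsBlackFace g.1)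
    (hc : crossesG g a b) (hg : contourCfg ω g = true → g ∈ C) :
    OpenStep (presentOutside ω C) a b :=
  ⟨hc.1, fun ⟨f, ⟨hf, hfC⟩, hfc⟩ => by
    obtain rfl := crossesG_unique (isBlackFace_of_present hf) hb hfc hc
    exact hfC (hg hf)⟩

lemma mem_GminusComp_of_isCorner_black {f w w' : ℤ × ℤ} (hb : IsBlackFace f)
    (h : ∀ d, contourCfg ω (f, d) = true → (f, d) ∈ C) (hw : IsCorner f w)
    (hw' : IsCorner f w') : w' ∈ GminusComp (presentOutside ω C) w := by
  obtain ⟨m, n⟩ := f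
  refine mem_GminusComp_of_isCorner ?_ ?_ ?_ hw hw'
  · exact openStep_of_crossesG hb (crossesG_vert_iff.2 (by simp)) (h false)
  · exact openStep_of_crossesG hb (crossesG_horiz_iff.2 (by simp)) (h true)
  · exact openStep_of_crossesG hb (crossesG_horiz_iff.2 (by simp)) (h true)

lemma mem_GminusComp_of_isCorner_white {x y : ℤ} {w w' : ℤ × ℤ} (hxy : Odd (x + y))
    (h : ∀ s ∈ slots x y, contourCfg ω s = true → s ∈ C) (hw : IsCorner (x, y) w)
    (hw' : IsCorner (x, y) w') : w' ∈ GminusComp (presentOutside ω C) w := by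
  have hb : ∀ a b : ℤ, a + b = x + y - 1 ∨ a + b = x + y + 1 → IsBlackFace (a, b) := by
    intro a b hab
    have := Int.odd_iff.1 hxy
    simp only [IsBlackFace, Int.even_iff]
    omega
  refine mem_GminusComp_of_isCorner ?_ ?_ ?_ hw hw'
  · exact openStep_of_crossesG (g := ((x, y - 1), false)) (hb _ _ (by omega))
      (crossesG_vert_iff.2 (by simp)) (h _ (by simp [slots]))
  · exact openStep_of_crossesG (g := ((x - 1, y), true)) (hb _ _ (by omega))
      (crossesG_horiz_iff.2 (by simp)) (h _ (by simp [slots]))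
  · exact openStep_of_crossesG (g := ((x + 1, y), true)) (hb _ _ (by omega))
      (crossesG_horiz_iff.2 (by simp)) (h _ (by simp [slots]))

lemma exists_isCorner_of_mem_slots {e : BEdge} {x y : ℤ} (he : e ∈ slots x y) :
    ∃ c, EdgeIncVtx e c ∧ IsCorner (x, y) c := by
  simp only [slots, Finset.mem_insert, Finset.mem_singleton] at he
  rcases he with rfl | rfl | rfl | rfl
  exacts [⟨(x + 1, y), by simp [EdgeIncVtx, IsCorner]⟩, ⟨(x, y), by simp [EdgeIncVtx, IsCorner]⟩,
    ⟨(x, y + 1), by simp [EdgeIncVtx, IsCorner]⟩, ⟨(x, y), by simp [EdgeIncVtx, IsCorner]⟩]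

lemma IsContour.mem_GminusComp_of_edgeIncVtx (hω : Constrained ω) (hC : IsContour ω C)
    {e : BEdge} {w w' : ℤ × ℤ} (he : e ∈ C) (hw : EdgeIncVtx e w) (hw' : EdgeIncVtx e w') :
    w' ∈ GminusComp (presentOutside ω C) w := by
  have hp := hC.present he
  refine mem_GminusComp_of_isCorner_black (isBlackFace_of_present hp) (fun d hd => ?_) hw hw'
  obtain ⟨f, d₀⟩ := e
  cases d <;> cases d₀ <;> dsimp only at hd hp ⊢
  · exact he
  · exact (not_present_horiz_and_vert hω f ⟨hp, hd⟩).elim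
  · exact (not_present_horiz_and_vert hω f ⟨hd, hp⟩).elim
  · exact he

/-- Consecutive edges of `C` end at the centre of a white face, each side of which is crossed
only by an absent edge or by an edge of `C`. -/
theorem IsContour.mem_GminusComp (hω : Constrained ω) (hC : IsContour ω C)
    {e e' : BEdge} {w w' : ℤ × ℤ} (he : e ∈ C) (he' : e' ∈ C) (hw : EdgeIncVtx e w)
    (hw' : EdgeIncVtx e' w') : w' ∈ GminusComp (presentOutside ω C) w := by
  rw [hC.eq_contourB he] at he'
  change ReflTransGen _ e e' at he'
  induction he' generalizing w' with
  | refl => exact hC.mem_GminusComp_of_edgeIncVtx hω he hw hw'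
  | @tail b c hchain hstep ih =>
    have hb : b ∈ C := by rw [hC.eq_contourB he]; exact hchain
    have hc : c ∈ C := hC.mem_of_shareEnd hb hstep.2.1 hstep.2.2
    obtain ⟨Q, hbQ, hcQ⟩ := shareEnd_iff.1 hstep.2.2
    obtain ⟨x, y, rfl, hbs⟩ := hbQ.exists_mem_slots
    have hxy := odd_of_mem_slots (isBlackFace_of_present hstep.1) hbs
    obtain ⟨cb, hcb, hcb'⟩ := exists_isCorner_of_mem_slots hbs
    obtain ⟨cc, hcc, hcc'⟩ := exists_isCorner_of_mem_slots (hasEnd_iff_mem_slots.1 hcQ)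
    have hwhite : cc ∈ GminusComp (presentOutside ω C) cb :=
      mem_GminusComp_of_isCorner_white hxy (fun s hs hps => hC.mem_of_shareEnd hb hps
        (shareEnd_iff.2 ⟨_, hbQ, hasEnd_iff_mem_slots.2 hs⟩)) hcb' hcc'
    exact mem_GminusComp_trans (mem_GminusComp_trans (ih hcb) hwhite)
      (hC.mem_GminusComp_of_edgeIncVtx hω hc hcc hw')

end Reach

/-! ### The edges of a contour incident to a cluster form an even subgraph -/

section LocalParity

variable {ω : Config} {z : ℤ × ℤ}

/-- The two sides of the face of `e` parallel to `e` carry equal states. -/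
lemma exists_mem_cluster_edgeIncVtx_iff (hω : Constrained ω) {e : BEdge} {u v : ℤ × ℤ}
    (hp : contourCfg ω e = true) (hc : crossesG e u v) :
    (∃ w ∈ cluster ω z, EdgeIncVtx e w) ↔ u ∈ cluster ω z ∨ v ∈ cluster ω z := by
  refine ⟨fun ⟨w, hw, hwe⟩ => ?_, fun h => h.elim (fun hu => ⟨u, hu, hc.edgeIncVtx⟩)
    (fun hv => ⟨v, hv, hc.symm.edgeIncVtx⟩)⟩
  obtain ⟨⟨m, n⟩, _ | _⟩ := e
  · obtain ⟨h₁, h₂⟩ := cols_eq_of_present_vert hω hp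
    have m₁ := mem_cluster_iff_of_agree (z := z) (zadj_iff.2 (by simp)) h₁
    have m₂ := mem_cluster_iff_of_agree (z := z) (zadj_iff.2 (by simp)) h₂
    rw [crossesG_vert_iff] at hc
    obtain ⟨wx, wy⟩ := w
    obtain ⟨hx | hx, hy | hy⟩ := hwe <;> dsimp only at hx hy <;> subst wx wy <;>
      rcases hc with ⟨rfl, rfl⟩ | ⟨rfl, rfl⟩ | ⟨rfl, rfl⟩ | ⟨rfl, rfl⟩ <;> tauto
  · obtain ⟨h₁, h₂⟩ := rows_eq_of_present_horiz hω hp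
    have m₁ := mem_cluster_iff_of_agree (z := z) (zadj_iff.2 (by simp)) h₁
    have m₂ := mem_cluster_iff_of_agree (z := z) (zadj_iff.2 (by simp)) h₂
    rw [crossesG_horiz_iff] at hc
    obtain ⟨wx, wy⟩ := w
    obtain ⟨hx | hx, hy | hy⟩ := hwe <;> dsimp only at hx hy <;> subst wx wy <;>
      rcases hc with ⟨rfl, rfl⟩ | ⟨rfl, rfl⟩ | ⟨rfl, rfl⟩ | ⟨rfl, rfl⟩ <;> tauto

lemma present_and_exists_mem_cluster_iff_xor (hω : Constrained ω) {e : BEdge}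
    {u v : ℤ × ℤ} (hb : IsBlackFace e.1) (hc : crossesG e u v) :
    (contourCfg ω e = true ∧ ∃ w ∈ cluster ω z, EdgeIncVtx e w) ↔
      Xor (u ∈ cluster ω z) (v ∈ cluster ω z) := by
  have hinc := fun hne => exists_mem_cluster_edgeIncVtx_iff (z := z) hω
    ((present_iff_of_crossesG hω hb hc).2 hne) hc
  rw [present_iff_of_crossesG hω hb hc]
  constructor
  · rintro ⟨hne, hw⟩
    rcases (hinc hne).1 hw with hu | hv
    · exact .inl ⟨hu, fun hv => hne (state_eq_of_mem_cluster hu hv)⟩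
    · exact .inr ⟨hv, fun hu => hne (state_eq_of_mem_cluster hu hv)⟩
  · intro hx
    have hne : ω u ≠ ω v := fun heq => by
      have := mem_cluster_iff_of_agree (z := z) hc.1 heq
      rcases hx with ⟨h, h'⟩ | ⟨h, h'⟩
      exacts [h' (this.1 h), h' (this.2 h)]
    refine ⟨hne, (hinc hne).2 ?_⟩
    rcases hx with ⟨h, -⟩ | ⟨h, -⟩
    exacts [.inl h, .inr h]

/-- With `a, b, c, d` saying whether the consecutive corners of a square lie in a set, the
boundary of the set is crossed an even number of times going around the square. -/
lemma even_xor_around_square (a b c d : Prop) :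
    Even ((if Xor b c then 1 else 0) + ((if Xor a d then 1 else 0) +
      ((if Xor d c then 1 else 0) + (if Xor a b then 1 else 0))) : ℕ) := by
  by_cases a <;> by_cases b <;> by_cases c <;> by_cases d <;> simp_all [Xor] <;> decide

def degAt (F : Finset BEdge) (Q : ℤ × ℤ) : ℕ := (F.filter (HasEnd · Q)).card

/-- At the centre of a white face, the edges of `F` cross exactly the sides of that face which
separate the cluster of `z` from its complement. -/
theorem even_degAt (hω : Constrained ω) {C : Set BEdge} (hC : IsContour ω C)
    {F : Finset BEdge} (hF : ∀ e, e ∈ F ↔ e ∈ C ∧ ∃ w ∈ cluster ω z, EdgeIncVtx e w)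
    (Q : ℤ × ℤ) : Even (degAt F Q) := by
  by_cases hQ : ∃ e₀ ∈ F, HasEnd e₀ Q
  swap
  · simp only [not_exists, not_and] at hQ
    simp [degAt, Finset.filter_false_of_mem hQ]
  obtain ⟨e₀, he₀F, he₀Q⟩ := hQ
  have he₀C := ((hF e₀).1 he₀F).1
  obtain ⟨x, y, rfl, hs₀⟩ := he₀Q.exists_mem_slots
  have hxy := Int.odd_iff.1 (odd_of_mem_slots (isBlackFace_of_present (hC.present he₀C)) hs₀)
  have hfilter : F.filter (HasEnd · (2 * x + 1, 2 * y + 1)) = (slots x y).filter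
      (fun s => contourCfg ω s = true ∧ ∃ w ∈ cluster ω z, EdgeIncVtx s w) := by
    ext s
    simp only [Finset.mem_filter, hF, hasEnd_iff_mem_slots]
    constructor
    · rintro ⟨⟨hsC, hinc⟩, hs⟩
      exact ⟨hs, hC.present hsC, hinc⟩
    · rintro ⟨hs, hps, hinc⟩
      exact ⟨⟨hC.mem_of_shareEnd he₀C hps (shareEnd_iff.2 ⟨_, hasEnd_iff_mem_slots.2 hs₀,
        hasEnd_iff_mem_slots.2 hs⟩), hinc⟩, hs⟩
  have hb : ∀ a b : ℤ, a + b = x + y - 1 ∨ a + b = x + y + 1 → IsBlackFace (a, b) := by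
    intro a b hab
    simp only [IsBlackFace, Int.even_iff]
    omega
  have hE : crossesG ((x + 1, y), true) (x + 1, y) (x + 1, y + 1) :=
    crossesG_horiz_iff.2 (by simp)
  have hW : crossesG ((x - 1, y), true) (x, y) (x, y + 1) := crossesG_horiz_iff.2 (by simp)
  have hN : crossesG ((x, y + 1), false) (x, y + 1) (x + 1, y + 1) :=
    crossesG_vert_iff.2 (by simp)
  have hS : crossesG ((x, y - 1), false) (x, y) (x + 1, y) := crossesG_vert_iff.2 (by simp)
  rw [degAt, hfilter, Finset.card_filter, slots, Finset.sum_insert (by simp; omega),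
    Finset.sum_insert (by simp), Finset.sum_insert (by simp; omega), Finset.sum_singleton]
  simp only [present_and_exists_mem_cluster_iff_xor hω (hb (x + 1) y (by omega)) hE,
    present_and_exists_mem_cluster_iff_xor hω (hb (x - 1) y (by omega)) hW,
    present_and_exists_mem_cluster_iff_xor hω (hb x (y + 1) (by omega)) hN,
    present_and_exists_mem_cluster_iff_xor hω (hb x (y - 1) (by omega)) hS]
  exact even_xor_around_square _ _ _ _

end LocalParity

/-! ### Parity of the number of edges met by a vertical ray -/

/-- `e` crosses the vertical ray going up from the vertex `v`. -/
def CrossesRay (e : BEdge) (v : ℤ × ℤ) : Prop :=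
  e.2 = true ∧ (v.1 = e.1.1 ∨ v.1 = e.1.1 + 1) ∧ v.2 ≤ e.1.2

def rayCount (F : Finset BEdge) (v : ℤ × ℤ) : ℕ := (F.filter (CrossesRay · v)).card

lemma even_ite_one_zero_iff {p : Prop} [Decidable p] :
    Even (if p then 1 else 0 : ℕ) ↔ ¬p := by
  split_ifs with h <;> simp [h]

lemma even_crossesRay_up (e : BEdge) (k l : ℤ) :
    Even ((if CrossesRay e (k, l) then 1 else 0) + (if CrossesRay e (k, l + 1) then 1 else 0) +
      (if crossesG e (k, l) (k, l + 1) then 1 else 0) : ℕ) := by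
  simp only [Nat.even_add, even_ite_one_zero_iff]
  obtain ⟨⟨m, n⟩, _ | _⟩ := e
  · simp [CrossesRay, crossesG_up_iff]
  · simp only [CrossesRay, crossesG_up_iff, true_and]
    omega

/-- One step to the right changes the ray by the edges crossing the step and by the edges
with an end on the half-line above the step. -/
lemma even_crossesRay_right (e : BEdge) (k l : ℤ) :
    Even ((if CrossesRay e (k, l) then 1 else 0) + (if CrossesRay e (k + 1, l) then 1 else 0) +
      (if crossesG e (k, l) (k + 1, l) then 1 else 0) +
      ((if (edgeEnds e).1.1 = 2 * k + 1 ∧ 2 * l < (edgeEnds e).1.2 then 1 else 0) +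
        (if (edgeEnds e).2.1 = 2 * k + 1 ∧ 2 * l < (edgeEnds e).2.2 then 1 else 0)) : ℕ) := by
  simp only [Nat.even_add, even_ite_one_zero_iff]
  obtain ⟨⟨m, n⟩, _ | _⟩ := e
  · simp only [CrossesRay, crossesG_right_iff, edgeEnds_vert, Bool.false_eq_true, false_and,
      true_and, not_false_eq_true, true_iff]
    omega
  · simp only [CrossesRay, crossesG_right_iff, edgeEnds_horiz, Bool.true_eq_false, false_and,
      true_and, not_false_eq_true, iff_true]
    omega

/-- Handshake lemma. -/
lemma even_sum_ends {F : Finset BEdge} (hdeg : ∀ Q, Even (degAt F Q)) (L : ℤ × ℤ → Prop) :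
    Even (∑ e ∈ F,
      ((if L (edgeEnds e).1 then 1 else 0) + (if L (edgeEnds e).2 then 1 else 0) : ℕ)) := by
  set T := (F.image (fun e => (edgeEnds e).1) ∪ F.image (fun e => (edgeEnds e).2)).filter L
  have hends : ∀ e ∈ F,
      ((if L (edgeEnds e).1 then 1 else 0) + (if L (edgeEnds e).2 then 1 else 0) : ℕ) =
        ∑ Q ∈ T, if HasEnd e Q then 1 else 0 := by
    intro e he
    have hsplit : ∀ Q, (if HasEnd e Q then 1 else 0 : ℕ) =
        (if (edgeEnds e).1 = Q then 1 else 0) + (if (edgeEnds e).2 = Q then 1 else 0) := by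
      intro Q
      by_cases h₁ : (edgeEnds e).1 = Q <;> by_cases h₂ : (edgeEnds e).2 = Q
      · exact absurd (h₁.trans h₂.symm) (edgeEnds_fst_ne_snd e)
      all_goals simp only [HasEnd, h₁, h₂, or_false, false_or, if_true, if_false]
    have hmem : ∀ P, P = (edgeEnds e).1 ∨ P = (edgeEnds e).2 → (P ∈ T ↔ L P) := by
      rintro P hP
      simp only [T, Finset.mem_filter, Finset.mem_union, Finset.mem_image, and_iff_right_iff_imp]
      rcases hP with rfl | rfl
      exacts [fun _ => .inl ⟨e, he, rfl⟩, fun _ => .inr ⟨e, he, rfl⟩]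
    simp only [hsplit, Finset.sum_add_distrib, Finset.sum_ite_eq, hmem _ (.inl rfl),
      hmem _ (.inr rfl)]
  rw [Finset.sum_congr rfl hends, Finset.sum_comm]
  refine Finset.even_sum _ fun Q _ => ?_
  have hQ := hdeg Q
  rwa [degAt, Finset.card_filter] at hQ

lemma even_rayCount_add_rayCount_add_card {F : Finset BEdge} (hdeg : ∀ Q, Even (degAt F Q))
    {a b : ℤ × ℤ} (hab : ZAdj a b) :
    Even (rayCount F a + rayCount F b + (F.filter (crossesG · a b)).card) := by
  have right : ∀ k l : ℤ, Even (rayCount F (k, l) + rayCount F (k + 1, l) +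
      (F.filter (crossesG · (k, l) (k + 1, l))).card) := by
    intro k l
    have h := Finset.even_sum _ fun e (_ : e ∈ F) => even_crossesRay_right e k l
    rw [Finset.sum_add_distrib, Nat.even_add] at h
    have hL := even_sum_ends hdeg fun P => P.1 = 2 * k + 1 ∧ 2 * l < P.2
    simpa only [rayCount, Finset.card_filter, Finset.sum_add_distrib] using h.2 (by convert hL)
  have up : ∀ k l : ℤ, Even (rayCount F (k, l) + rayCount F (k, l + 1) +
      (F.filter (crossesG · (k, l) (k, l + 1))).card) := by
    intro k l
    simpa only [rayCount, Finset.card_filter, Finset.sum_add_distrib] using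
      Finset.even_sum _ fun e (_ : e ∈ F) => even_crossesRay_up e k l
  have swap : F.filter (crossesG · b a) = F.filter (crossesG · a b) :=
    Finset.filter_congr fun e _ => ⟨crossesG.symm, crossesG.symm⟩
  obtain ⟨k, l⟩ := a
  obtain ⟨k', l'⟩ := b
  rcases zadj_iff.1 hab with ⟨h₁, h₂⟩ | ⟨h₁, h₂⟩ | ⟨h₁, h₂⟩ | ⟨h₁, h₂⟩ <;>
    simp only at h₁ h₂ <;> subst k' l'
  · exact right k l
  · simpa [← swap, add_comm (rayCount F (k, l))] using right (k - 1) l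
  · exact up k l
  · simpa [← swap, add_comm (rayCount F (k, l))] using up k (l - 1)

theorem even_rayCount_iff_of_mem_GminusComp {F : Finset BEdge} (hdeg : ∀ Q, Even (degAt F Q))
    {R : Set BEdge} (hFR : ∀ e ∈ F, e ∈ R) {v w : ℤ × ℤ} (h : w ∈ GminusComp R v) :
    Even (rayCount F v) ↔ Even (rayCount F w) := by
  change ReflTransGen (OpenStep R) v w at h
  induction h with
  | refl => rfl
  | tail _ hs ih =>
    have h := even_rayCount_add_rayCount_add_card hdeg hs.1
    rwa [Finset.card_eq_zero.2 (Finset.filter_eq_empty_iff.2 fun e he hc =>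
      hs.2 ⟨e, hFR e he, hc⟩), add_zero, Nat.even_add, ← ih] at h

lemma exists_far_mem {C : Set BEdge} (hC : C.Infinite) (B : ℤ) :
    ∃ e ∈ C, B < |e.1.1| ∨ B < |e.1.2| := by
  by_contra! h
  exact hC ((((Set.finite_Icc (-B) B).prod (Set.finite_Icc (-B) B)).prod Set.finite_univ).subset
    fun e he => ⟨⟨abs_le.1 (h e he).1, abs_le.1 (h e he).2⟩, trivial⟩)

/-- Beside and above `F` no ray meets `F`; below `F`, the ray count is carried sideways
along a row that no edge of `F` crosses. -/
theorem exists_even_rayCount_of_far {F : Finset BEdge} (hdeg : ∀ Q, Even (degAt F Q)) :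
    ∃ B : ℤ, ∀ v : ℤ × ℤ, B < |v.1| ∨ B < |v.2| → Even (rayCount F v) := by
  obtain ⟨N, hN⟩ : ∃ N : ℤ, ∀ e ∈ F, -N ≤ e.1.1 ∧ e.1.1 ≤ N ∧ -N ≤ e.1.2 ∧ e.1.2 ≤ N :=
    ⟨(F.sup fun e => e.1.1.natAbs + e.1.2.natAbs : ℕ), fun e he => by
      have := Finset.le_sup (f := fun e : BEdge => e.1.1.natAbs + e.1.2.natAbs) he
      omega⟩
  have hzero : ∀ v : ℤ × ℤ, N + 1 < |v.1| ∨ N < v.2 → rayCount F v = 0 := by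
    intro v hv
    refine Finset.card_eq_zero.2 (Finset.filter_eq_empty_iff.2 fun e he ⟨_, hcol, hrow⟩ => ?_)
    have := hN e he
    rw [lt_abs] at hv
    omega
  refine ⟨N + 1, fun v hv => ?_⟩
  by_cases hfar : N + 1 < |v.1| ∨ N < v.2
  · rw [hzero v hfar]
    exact Even.zero
  have hbelow : v.2 < -(N + 1) := by
    rw [lt_abs, lt_abs] at hv
    rw [lt_abs] at hfar
    omega
  have hstep : ∀ k : ℤ, OpenStep F (k, v.2) (k + 1, v.2) := fun k =>
    ⟨zadj_iff.2 (by simp), fun ⟨e, he, hc⟩ => by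
      have := hN e he
      have := (crossesG_right_iff.1 hc).2.2
      omega⟩
  have hrow : (N + 2, v.2) ∈ GminusComp (F : Set BEdge) v := by
    have := reflTransGen_of_int_chain (r := OpenStep F) (fun k => (v.1 + k, v.2))
      (fun k => by rw [← add_assoc]; exact hstep _)
      (fun k => by rw [← add_assoc]; exact (hstep _).symm) (N + 2 - v.1)
    rwa [add_zero, add_sub_cancel] at this
  rw [even_rayCount_iff_of_mem_GminusComp hdeg (fun e he => he) hrow,
    hzero _ (.inl (lt_abs.2 (.inl (by omega))))]
  exact Even.zero

/-! ### Finite clusters are surrounded by contours -/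

lemma finite_setOf_edgeIncVtx (w : ℤ × ℤ) : {e : BEdge | EdgeIncVtx e w}.Finite :=
  (((Set.finite_Icc (w.1 - 1) w.1).prod (Set.finite_Icc (w.2 - 1) w.2)).prod
    Set.finite_univ).subset
      fun _ ⟨hx, hy⟩ => ⟨⟨Set.mem_Icc.2 (by omega), Set.mem_Icc.2 (by omega)⟩, trivial⟩

/-- Let `a` be a highest vertex of the cluster. The edge `h` crossing the side above `a` lies on
a contour `C₀`; its edges incident to the cluster form `F`, and the ray up from `a` meets `F`
only in `h`. -/
theorem exists_contour_surrounding {ω : Config} (hω : Constrained ω) {u : ℤ × ℤ}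
    (hA : (cluster ω u).Finite) :
    ∃ C₀ : Set BEdge, ∃ F : Finset BEdge, IsContour ω C₀ ∧ (∀ e ∈ F, e ∈ C₀) ∧
      (∀ Q, Even (degAt F Q)) ∧ ¬Even (rayCount F u) := by
  obtain ⟨⟨a₁, a₂⟩, haA, htop⟩ := Set.exists_max_image _ Prod.snd hA ⟨u, .refl⟩
  have hup : ZAdj (a₁, a₂) (a₁, a₂ + 1) := zadj_iff.2 (by simp)
  have hne : ω (a₁, a₂) ≠ ω (a₁, a₂ + 1) := fun heq => by
    have := htop _ ((mem_cluster_iff_of_agree hup heq).1 haA)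
    simp at this
  obtain ⟨h, hhb, hhc⟩ := exists_black_crossesG hup
  have hC₀ := isContour_contourB ((present_iff_of_crossesG hω hhb hhc).2 hne)
  have hfin : {e | e ∈ contourB (contourCfg ω) h ∧ ∃ w ∈ cluster ω u, EdgeIncVtx e w}.Finite :=
    (hA.biUnion fun w _ => finite_setOf_edgeIncVtx w).subset
      fun e ⟨_, w, hw, hew⟩ => Set.mem_biUnion hw hew
  have hF : ∀ e, e ∈ hfin.toFinset ↔
      e ∈ contourB (contourCfg ω) h ∧ ∃ w ∈ cluster ω u, EdgeIncVtx e w :=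
    fun e => hfin.mem_toFinset
  have hdeg := even_degAt hω hC₀ hF
  have hray : hfin.toFinset.filter (CrossesRay · (a₁, a₂)) = {h} := by
    ext f
    simp only [Finset.mem_filter, hF, Finset.mem_singleton]
    constructor
    · rintro ⟨⟨hfC, w, hw, hfw⟩, hdir, hcol, hrow⟩
      have hwa := htop w hw
      have hfrow : f.1.2 = a₂ := by obtain ⟨-, hy | hy⟩ := hfw <;> simp only at hrow <;> omega
      exact crossesG_unique (isBlackFace_of_present (hC₀.present hfC)) hhb
        (crossesG_up_iff.2 ⟨hdir, hcol, hfrow⟩) hhc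
    · rintro rfl
      obtain ⟨hdir, hcol, hrow⟩ := crossesG_up_iff.1 hhc
      exact ⟨⟨.refl, _, haA, hhc.edgeIncVtx⟩, hdir, hcol, hrow.ge⟩
  refine ⟨_, hfin.toFinset, hC₀, fun e he => ((hF e).1 he).1, hdeg, ?_⟩
  rw [even_rayCount_iff_of_mem_GminusComp hdeg (fun e he => hC₀.present ((hF e).1 he).1)
    (cluster_subset_GminusComp hω u haA), rayCount, hray, Finset.card_singleton]
  exact Nat.not_even_one

theorem IsContour.even_rayCount_of_edgeIncVtx {ω : Config} (hω : Constrained ω)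
    {C : Set BEdge} (hC : IsContour ω C) (hCi : C.Infinite) {F : Finset BEdge}
    (hdeg : ∀ Q, Even (degAt F Q)) (hF : ∀ f ∈ F, f ∈ presentOutside ω C) {e : BEdge}
    {w : ℤ × ℤ} (he : e ∈ C) (hw : EdgeIncVtx e w) : Even (rayCount F w) := by
  obtain ⟨B, hB⟩ := exists_even_rayCount_of_far hdeg
  obtain ⟨e', he', hfar⟩ := exists_far_mem hCi B
  rw [even_rayCount_iff_of_mem_GminusComp hdeg hF
    (hC.mem_GminusComp hω he he' hw ⟨.inl rfl, .inl rfl⟩)]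
  exact hB _ hfar

/-- Lemma 2.5, I and II, of the paper: two distinct infinite contours
force an infinite cluster incident to the first of them; in particular there is an
infinite (0- or 1-)cluster. -/
theorem infinite_cluster_incident_to_contour
    (ω : Config) (hω : Constrained ω) (C₁ C₂ : Set BEdge)
    (h₁ : IsContour ω C₁) (h₂ : IsContour ω C₂)
    (h₁i : C₁.Infinite) (h₂i : C₂.Infinite) (hne : C₁ ≠ C₂) :
    (∃ D, IsCluster ω D ∧ D.Infinite ∧ ContourIncCluster C₁ D) ∧
    (∃ D, IsCluster ω D ∧ D.Infinite) := by
  have key : ∃ D, IsCluster ω D ∧ D.Infinite ∧ ContourIncCluster C₁ D := by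
    by_contra! hfin
    obtain ⟨e₂, he₂⟩ := h₂i.nonempty
    obtain ⟨e₀, he₀, u, hu, hu₂⟩ :=
      exists_edgeIncVtx_mem_GminusComp h₁i.nonempty (e₂.1.1, e₂.1.2)
    have hA : (cluster ω u).Finite :=
      Set.not_infinite.1 fun hinf => hfin _ ⟨u, rfl⟩ hinf ⟨e₀, he₀, u, .refl, hu⟩
    obtain ⟨C₀, F, hC₀, hFC₀, hdeg, hodd⟩ := exists_contour_surrounding hω hA
    by_cases hC : C₀ = C₁
    · rw [hC] at hFC₀
      refine hodd ((even_rayCount_iff_of_mem_GminusComp hdeg hFC₀ hu₂).1 ?_)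
      exact h₂.even_rayCount_of_edgeIncVtx hω h₂i hdeg (fun f hf => ⟨h₁.present (hFC₀ f hf),
        fun hf₂ => hne (h₁.eq_of_mem h₂ (hFC₀ f hf) hf₂)⟩) he₂ ⟨.inl rfl, .inl rfl⟩
    · exact hodd (h₁.even_rayCount_of_edgeIncVtx hω h₁i hdeg (fun f hf =>
        ⟨hC₀.present (hFC₀ f hf), fun hf₁ => hC (hC₀.eq_of_mem h₁ (hFC₀ f hf) hf₁)⟩) he₀ hu)
  obtain ⟨D, hD, hDi, -⟩ := id key
  exact ⟨key, D, hD, hDi⟩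

end CP

end
end
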